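/- arXiv:2410.09887 — 4 statements merged into one kernel-verified Lean document; each statement's English description precedes it below -/
import Mathlib

section
/- Let k ⊆ K be a separable field extension of characteristic p > 0 and let x ∈ K be separably algebraic over k. Then the extension k(x) ⊆ K is separable. -/
/-- Subfields `L` and `M` of an ambient field are linearly disjoint over a common
subfield `F` if every finite tuple of elements of `L` that is linearly independent
over `F` remains linearly independent over `M`. -/
def LinDisj {K : Type*} [Field K] (F L M : Subfield K) : Prop :=
  ∀ (n : ℕ) (a : Fin n → K), (∀ i, a i ∈ L) →
    LinearIndependent ↥F a → LinearIndependent ↥M a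

/-- The extension `F ⊆ K` (of characteristic `p`) is separable if `F` is linearly
disjoint from `K^p` over `F^p`. -/
def SepExt {K : Type*} [Field K] (p : ℕ) [Fact p.Prime] [CharP K p]
    (F : Subfield K) : Prop :=
  LinDisj (F.map (frobenius K p)) F ((⊤ : Subfield K).map (frobenius K p))

/-!
Because `x` is separable over `k`, `k(x) = k(xᵖ) = k[xᵖ]`, so `L := k(x)` lies in the
`Lᵖ`-span of `k`. A tuple of `L` that is independent over `Lᵖ` can then be written in terms
of a finite family `e` of `k` that is independent over `kᵖ`, hence over `Kᵖ` by separability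
of `k`. The coefficient rows of the tuple are independent over `Lᵖ`, so also over `Kᵖ`
(linear independence of vectors survives a field extension), and therefore so is the tuple.
-/

open Submodule

theorem LinearIndependent.extendScalars_of_forall_mem_span {A B V ι ι' : Type*} [Field A]
    [Field B] [Algebra A B] [AddCommGroup V] [Module A V] [Module B V] [IsScalarTower A B V]
    [Finite ι'] {a : ι → V} (ha : LinearIndependent A a) {e : ι' → V}
    (he : LinearIndependent B e) (h : ∀ i, a i ∈ span A (Set.range e)) :
    LinearIndependent B a := by
  have := Fintype.ofFinite ι'
  choose t ht using fun i => (mem_span_range_iff_exists_fun A).1 (h i)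
  have hta : Fintype.linearCombination A e ∘ t = a := funext fun i => by
    simp [Fintype.linearCombination_apply, ht]
  have htB : Fintype.linearCombination B e ∘ (fun i => algebraMap A B ∘ t i) = a := by
    rw [← hta]; funext i; simp [Fintype.linearCombination_apply]
  rw [← htB]
  refine LinearIndependent.map' ?_ _ ?_
  · exact linearIndependent_algebraMap_comp_iff.2 (LinearIndependent.of_comp _ (hta ▸ ha))
  · exact LinearMap.ker_eq_bot.2 he.fintypeLinearCombination_injective

namespace LinDisj

variable {K : Type*} [Field K]

theorem linearIndependent {F L M : Subfield K} (h : LinDisj F L M) {ι : Type*} [Finite ι]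
    {a : ι → K} (haL : ∀ i, a i ∈ L) (ha : LinearIndependent F a) :
    LinearIndependent M a := by
  obtain ⟨n, ⟨eqv⟩⟩ := Finite.exists_equiv_fin ι
  rw [← linearIndependent_equiv eqv.symm] at ha ⊢
  exact h n _ (fun i => haL _) ha

theorem of_subset_span {F₀ F M k L : Subfield K} (h : LinDisj F₀ k M) (hF₀F : F₀ ≤ F)
    (hFM : F ≤ M) (hL : (L : Set K) ⊆ span F (k : Set K)) : LinDisj F L M := by
  classical
  intro n a haL ha
  obtain ⟨T, hTk, haT⟩ := subset_span_finite_of_subset_span (R := F)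
    (t := Finset.univ.image a) (fun y hy => by
      obtain ⟨i, -, rfl⟩ := Finset.mem_image.1 hy
      exact hL (haL i))
  obtain ⟨b, hbT, hspan, hb⟩ := exists_linearIndependent F₀ (T : Set K)
  have : Finite b := (T.finite_toSet.subset hbT).to_subtype
  let : Algebra F₀ F := (Subfield.inclusion hF₀F).toAlgebra
  let : Algebra F M := (Subfield.inclusion hFM).toAlgebra
  have : IsScalarTower F₀ F K := IsScalarTower.of_algebraMap_eq fun _ => rfl
  have : IsScalarTower F M K := IsScalarTower.of_algebraMap_eq fun _ => rfl
  have hTb : span F (T : Set K) ≤ span F b :=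
    span_le.2 fun _ hy => span_le_restrictScalars F₀ F b (hspan.ge (subset_span hy))
  refine ha.extendScalars_of_forall_mem_span (h.linearIndependent (fun y => hTk (hbT y.2)) hb)
    fun i => ?_
  rw [Subtype.range_coe]
  exact hTb (haT (Finset.mem_image_of_mem a (Finset.mem_univ i)))

end LinDisj

theorem sup_closure_singleton_eq_adjoin_toSubfield {K : Type*} [Field K] (k : Subfield K) (x : K) :
    k ⊔ Subfield.closure {x} = (IntermediateField.adjoin k {x}).toSubfield := by
  rw [IntermediateField.adjoin_toSubfield, Subfield.closure_union,
    show Set.range (algebraMap k K) = k from Subtype.range_coe, Subfield.closure_eq]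

theorem IsSeparable.mem_adjoin_pow {F E : Type*} [Field F] [Field E] [Algebra F E]
    (p : ℕ) [ExpChar F p] {x : E} (hx : IsSeparable F x) : x ∈ Algebra.adjoin F {x ^ p} := by
  rw [← IntermediateField.adjoin_simple_toSubalgebra_of_isAlgebraic
    (hx.isIntegral.pow p).isAlgebraic,
    ← IntermediateField.adjoin_simple_eq_adjoin_pow_expChar_of_isSeparable F E hx p]
  exact IntermediateField.mem_adjoin_simple_self F x

theorem coe_sup_closure_subset_span_frobenius_map {K : Type*} [Field K] (p : ℕ) [ExpChar K p]
    (k : Subfield K) {x : K} (hx : IsSeparable k x) :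
    ((k ⊔ Subfield.closure {x} : Subfield K) : Set K) ⊆
      span ((k ⊔ Subfield.closure {x}).map (frobenius K p)) (k : Set K) := by
  set L := k ⊔ Subfield.closure {x}
  have hxL : x ∈ L := le_sup_right (α := Subfield K) (Subfield.subset_closure rfl)
  have hL : (L : Set K) = Algebra.adjoin k {x} := by
    rw [← IntermediateField.adjoin_simple_toSubalgebra_of_isAlgebraic hx.isIntegral.isAlgebraic,
      show L = _ from sup_closure_singleton_eq_adjoin_toSubfield k x]
    rfl
  have hle : Algebra.adjoin k {x} ≤ Algebra.adjoin k {x ^ p} :=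
    Algebra.adjoin_le (Set.singleton_subset_iff.2 (hx.mem_adjoin_pow p))
  have hring : (Algebra.adjoin k {x ^ p}).toSubring ≤
      (Algebra.adjoin (L.map (frobenius K p)) (k : Set K)).toSubring := by
    rw [Algebra.adjoin_eq_ring_closure, Subring.closure_le]
    rintro z (⟨c, rfl⟩ | rfl)
    · exact Algebra.subset_adjoin c.2
    · exact Subalgebra.algebraMap_mem _ (⟨x ^ p, x, hxL, rfl⟩ : L.map (frobenius K p))
  have hspan : (Algebra.adjoin (L.map (frobenius K p)) (k : Set K) : Set K) =
      span (L.map (frobenius K p)) (k : Set K) := by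
    rw [← Subalgebra.coe_toSubmodule, Algebra.adjoin_eq_span, show
      (Submonoid.closure (k : Set K) : Set K) = k from
        congrArg SetLike.coe (Submonoid.closure_eq k.toSubmonoid)]
  rw [hL, ← hspan]
  exact fun y hy => hring (hle hy)

/-- If `k ⊆ K` is a separable extension of characteristic `p > 0` and `x ∈ K` is
separably algebraic over `k`, then the extension `k(x) ⊆ K` is separable. -/
theorem sepExt_adjoin_separable {K : Type*} [Field K] (p : ℕ) [Fact p.Prime]
    [CharP K p] (k : Subfield K) (hk : SepExt p k) (x : K)
    (hx : IsSeparable ↥k x) :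
    SepExt p (k ⊔ Subfield.closure {x}) := by
  exact LinDisj.of_subset_span hk ((Subfield.gc_map_comap _).monotone_l le_sup_left)
    ((Subfield.gc_map_comap _).monotone_l le_top)
    (coe_sup_closure_subset_span_frobenius_map p k hx)
end

section
/- Mac Lane's theorem (algebraic independence part): if k ⊆ L is a finitely generated separable field extension of characteristic p > 0 and A is a p-basis of L over k, then the elements of A are algebraically independent over k. -/
open Function

section

variable {K : Type*} [Field K] {ι ι' : Type*}

theorem linearIndependent_mul_of_le {R S : Subfield K} (hRS : R ≤ S) [Fintype ι] [Fintype ι']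
    {v : ι → K} {w : ι' → K} (hv : LinearIndependent R v) (hvS : ∀ i, v i ∈ S)
    (hw : LinearIndependent S w) :
    LinearIndependent R fun x : ι × ι' => v x.1 * w x.2 := by
  rw [Fintype.linearIndependent_iff] at hv hw ⊢
  intro g hg ⟨i, j⟩
  have hcol : ∀ j, ∑ i, g (i, j) • v i = 0 := by
    intro j
    have := hw (fun j => ⟨∑ i, g (i, j) • v i,
      sum_mem fun i _ => S.mul_mem (hRS (g (i, j)).2) (hvS i)⟩) ?_ j
    · exact congrArg Subtype.val this
    · simpa [Fintype.sum_prod_type, Finset.sum_mul, Subfield.smul_def, mul_assoc,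
        Finset.sum_comm (γ := ι)] using hg
  exact hv _ (hcol j) i

theorem LinearIndependent.subfield_map {K' : Type*} [Field K'] (φ : K →+* K') {k : Subfield K}
    {v : ι → K} (hv : LinearIndependent k v) : LinearIndependent (k.map φ) (φ ∘ v) := by
  rw [linearIndependent_iff'] at hv ⊢
  intro s g hg i hi
  choose y hyk hy using fun i => Subfield.mem_map.1 (g i).2
  have hsum : ∑ i ∈ s, (⟨y i, hyk i⟩ : k) • v i = 0 := by
    apply φ.injective
    simpa [Subfield.smul_def, hy] using hg
  have hyi : y i = 0 := congrArg Subtype.val (hv s _ hsum i hi)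
  ext
  simp [← hy i, hyi]

theorem LinDisj.linearIndependent_symm {F L M : Subfield K} (h : LinDisj F L M) (hFL : F ≤ L)
    (hFM : F ≤ M) [Fintype ι] {v : ι → K} (hvM : ∀ i, v i ∈ M)
    (hv : LinearIndependent F v) :
    LinearIndependent L v := by
  rw [Fintype.linearIndependent_iff]
  intro c hc
  -- expand the coefficients `c` in an `F`-basis of their span, which stays independent over `M`
  let W := Submodule.span F (Set.range fun i => (c i : K))
  have : Module.Finite F W := Module.Finite.span_of_finite F (Set.finite_range _)
  let u := Module.finBasis F W
  have hWL : W ≤ ((L.toIntermediateField fun x => hFL x.2).toSubalgebra.toSubmodule) :=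
    Submodule.span_le.2 (Set.range_subset_iff.2 fun i => (c i).2)
  have hu : LinearIndependent M fun j => (u j : K) :=
    h _ _ (fun j => hWL (u j).2) (u.linearIndependent.map' W.subtype W.ker_subtype)
  let d : ι → Fin (Module.finrank F W) → F := fun i =>
    u.repr ⟨c i, Submodule.subset_span ⟨i, rfl⟩⟩
  have hd : ∀ i, (c i : K) = ∑ j, d i j • (u j : K) := fun i => by
    simpa only [Submodule.coe_sum, Submodule.coe_smul] using
      (congrArg Subtype.val (u.sum_repr ⟨c i, Submodule.subset_span ⟨i, rfl⟩⟩)).symm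
  have hcol : ∀ j, ∑ i, d i j • v i = 0 := by
    intro j
    have := Fintype.linearIndependent_iff.1 hu (fun j => ⟨∑ i, d i j • v i,
      sum_mem fun i _ => M.mul_mem (hFM (d i j).2) (hvM i)⟩) ?_ j
    · exact congrArg Subtype.val this
    · rw [← hc]
      simp only [Subfield.smul_def, smul_eq_mul, hd, Finset.sum_mul]
      rw [Finset.sum_comm]
      exact Finset.sum_congr rfl fun i _ => Finset.sum_congr rfl fun j _ => by ring
  intro i
  have hdi : ∀ j, d i j = 0 := fun j => Fintype.linearIndependent_iff.1 hv _ (hcol j) i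
  ext
  simp [hd, hdi]

open MvPolynomial in
theorem algebraicIndependent_of_linearIndependent_monomials {R A : Type*} [CommRing R]
    [CommRing A] [Algebra R A] [Fintype ι] {x : ι → A}
    (h : ∀ D, LinearIndependent R fun ν : ι → Fin D => ∏ i, x i ^ (ν i : ℕ)) :
    AlgebraicIndependent R x := by
  classical
  have hmono : LinearIndependent R fun e : ι →₀ ℕ => aeval x (monomial e (1 : R)) := by
    rw [linearIndependent_iff_finset_linearIndependent]
    intro s
    obtain ⟨D, hD⟩ : ∃ D, ∀ e ∈ s, ∀ i, e i < D :=
      ⟨s.sup (fun e => ∑ i, e i) + 1, fun e he i => Nat.lt_succ_of_le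
        ((Finset.single_le_sum (fun _ _ => Nat.zero_le _) (Finset.mem_univ i)).trans
          (Finset.le_sup (f := fun e => ∑ i, e i) he))⟩
    convert (h D).comp (fun e : s => fun i => (⟨e.1 i, hD e e.2 i⟩ : Fin D)) fun e₁ e₂ he =>
      Subtype.ext (Finsupp.ext fun i => congrArg Fin.val (congrFun he i)) using 1
    ext e
    simp [aeval_monomial, Finsupp.prod_fintype]
  rw [algebraicIndependent_iff_injective_aeval]
  have haeval : (aeval x).toLinearMap =
      (basisMonomials ι R).constr R fun e => aeval x (monomial e (1 : R)) :=
    (basisMonomials ι R).ext fun e => by rw [Module.Basis.constr_basis, coe_basisMonomials]; rfl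
  exact congrArg DFunLike.coe haeval ▸ Module.Basis.injective_constr_of_linearIndependent _ hmono

variable (p : ℕ) [Fact p.Prime] [CharP K p]

open Polynomial in
theorem linearIndependent_pow_of_pow_mem {M : Subfield K} {a : K} (hap : a ^ p ∈ M)
    (ha : a ∉ M) : LinearIndependent M fun i : Fin p => a ^ (i : ℕ) := by
  have hp : p.Prime := Fact.out
  have hirr : Irreducible (X ^ p - C (⟨a ^ p, hap⟩ : M)) := by
    refine X_pow_sub_C_irreducible_of_prime hp fun b hb => ha ?_
    have hba : (b : K) = a := frobenius_inj K p (congrArg Subtype.val hb)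
    exact hba ▸ b.2
  have hmin : minpoly M a = X ^ p - C ⟨a ^ p, hap⟩ :=
    (minpoly.eq_of_irreducible_of_monic hirr
      (by rw [map_sub, aeval_X_pow, aeval_C]; exact sub_self _)
      (monic_X_pow_sub_C _ hp.ne_zero)).symm
  have hdeg : (minpoly M a).natDegree = p := by
    rw [hmin, natDegree_X_pow_sub_C]
  exact (linearIndependent_pow a).comp (Fin.cast hdeg.symm) (Fin.cast_injective _)

variable {E : Subfield K} {A : Set K}

theorem linearIndependent_reducedMonomials (hE : ∀ x : K, x ^ p ∈ E)
    (hA : ∀ a ∈ A, a ∉ E ⊔ Subfield.closure (A \ {a})) :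
    ∀ {m : ℕ} {b : Fin m → K}, Injective b → Set.range b ⊆ A →
      LinearIndependent ↥(E ⊔ Subfield.closure (A \ Set.range b))
        fun ν : Fin m → Fin p => ∏ i, b i ^ (ν i : ℕ)
  | 0, b, _, _ => linearIndependent_unique_iff.2 (by simp)
  | m + 1, b, hb, hbA => by
    set a := b 0
    set b' : Fin m → K := b ∘ Fin.succ
    have haA : a ∈ A := hbA (Set.mem_range_self 0)
    have hle : E ⊔ Subfield.closure (A \ Set.range b) ≤ E ⊔ Subfield.closure (A \ {a}) :=
      sup_le_sup_left (Subfield.closure_mono (Set.sdiff_subset_sdiff_right (by simp [a]))) _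
    have hpow : LinearIndependent ↥(E ⊔ Subfield.closure (A \ Set.range b))
        fun i : Fin p => a ^ (i : ℕ) :=
      linearIndependent_pow_of_pow_mem p (le_sup_left (a := E) (hE a)) fun h => hA a haA (hle h)
    have hmem : ∀ i : Fin p, a ^ (i : ℕ) ∈ E ⊔ Subfield.closure (A \ Set.range b') := by
      refine fun i => pow_mem (le_sup_right (a := E) (Subfield.subset_closure
        (show a ∈ A \ Set.range b' from ⟨haA, ?_⟩))) _
      rintro ⟨j, hj⟩
      exact Fin.succ_ne_zero j (hb hj)
    have hrest := linearIndependent_reducedMonomials hE hA (hb.comp (Fin.succ_injective m))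
      ((Set.range_comp_subset_range _ _).trans hbA)
    have hR :
        E ⊔ Subfield.closure (A \ Set.range b) ≤ E ⊔ Subfield.closure (A \ Set.range b') :=
      sup_le_sup_left (Subfield.closure_mono
        (Set.sdiff_subset_sdiff_right (Set.range_comp_subset_range _ _))) _
    refine (linearIndependent_equiv (Fin.consEquiv fun _ => Fin p)).1 ?_
    convert linearIndependent_mul_of_le hR hpow hmem hrest using 1
    ext ν
    simp [Fin.prod_univ_succ, a]

variable {k : Subfield K}
  (hsep : LinDisj (k.map (frobenius K p)) k ((⊤ : Subfield K).map (frobenius K p)))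
  (hindep : ∀ a ∈ A,
    a ∉ (⊤ : Subfield K).map (frobenius K p) ⊔ k ⊔ Subfield.closure (A \ {a}))
  {n : ℕ} {a : Fin n → K} (ha : Injective a) (haA : Set.range a ⊆ A)
include hsep hindep ha haA

theorem linearIndependent_monomials_pow :
    ∀ j, LinearIndependent k fun ν : Fin n → Fin (p ^ j) => ∏ i, a i ^ (ν i : ℕ)
  | 0 => by
    rw [pow_zero]
    exact linearIndependent_unique_iff.2 (by simp)
  | j + 1 => by
    have hpowE : ∀ x : K, x ^ p ∈ (⊤ : Subfield K).map (frobenius K p) ⊔ k :=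
      fun x => le_sup_left (a := (⊤ : Subfield K).map _) ⟨x, trivial, rfl⟩
    have hpowers :
        LinearIndependent k fun ν : Fin n → Fin (p ^ j) => (∏ i, a i ^ (ν i : ℕ)) ^ p :=
      hsep.linearIndependent_symm (by rintro _ ⟨x, hx, rfl⟩; exact pow_mem hx p)
        ((Subfield.gc_map_comap _).monotone_l le_top) (fun ν => ⟨_, trivial, rfl⟩)
        ((linearIndependent_monomials_pow j).subfield_map (frobenius K p))
    let e : (Fin n → Fin (p ^ j)) × (Fin n → Fin p) ≃ (Fin n → Fin (p ^ (j + 1))) :=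
      (Equiv.arrowProdEquivProdArrow _ _ _).symm.trans
        (Equiv.piCongrRight fun _ => finProdFinEquiv.trans (finCongr (pow_succ p j).symm))
    refine (linearIndependent_equiv' e ?_).1 <|
      linearIndependent_mul_of_le (le_sup_right.trans le_sup_left) hpowers
        (fun ν => le_sup_left (b := Subfield.closure (A \ Set.range a)) (hpowE _))
        (linearIndependent_reducedMonomials p hpowE hindep ha haA)
    ext ⟨q, ρ⟩
    simp [e, pow_add, pow_mul', Finset.prod_mul_distrib, Finset.prod_pow, mul_comm]

theorem linearIndependent_monomials (D : ℕ) :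
    LinearIndependent k fun ν : Fin n → Fin D => ∏ i, a i ^ (ν i : ℕ) := by
  have hD : D ≤ p ^ D := (Nat.lt_pow_self (Fact.out : p.Prime).one_lt).le
  have hcast : Injective fun (ν : Fin n → Fin D) i => Fin.castLE hD (ν i) :=
    fun _ _ h => funext fun i => Fin.castLE_injective hD (congrFun h i)
  exact ((linearIndependent_monomials_pow p hsep hindep ha haA D).comp _ hcast :)

end

theorem macLane_algIndep_general {L : Type*} [Field L] (p : ℕ) [Fact p.Prime] [CharP L p]
    (k : Subfield L)
    (hsep : LinDisj (k.map (frobenius L p)) k ((⊤ : Subfield L).map (frobenius L p)))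
    (A : Set L)
    (hindep : ∀ a ∈ A,
      a ∉ (⊤ : Subfield L).map (frobenius L p) ⊔ k ⊔ Subfield.closure (A \ {a})) :
    AlgebraicIndependent ↥k ((↑) : A → L) := by
  refine algebraicIndependent_of_finite A fun t htA htfin => ?_
  have := htfin.fintype
  let e := (Fintype.equivFin t).symm
  rw [← algebraicIndependent_equiv e]
  exact algebraicIndependent_of_linearIndependent_monomials <|
    linearIndependent_monomials p hsep hindep (Subtype.val_injective.comp e.injective)
      (Set.range_subset_iff.2 fun i => htA (e i).2)

/-- Mac Lane's theorem, algebraic independence part: if `k ⊆ L` is a finitely generated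
separable field extension of characteristic `p > 0` (`k` linearly disjoint from `L^p`
over `k^p`) and `A` is a `p`-basis of `L` over `k`, then the elements of `A` are
algebraically independent over `k`. -/
theorem macLane_algIndep {L : Type*} [Field L] (p : ℕ) [Fact p.Prime] [CharP L p]
    (k : Subfield L)
    (hfg : ∃ S : Finset L, k ⊔ Subfield.closure ↑S = ⊤)
    (hsep : LinDisj (k.map (frobenius L p)) k ((⊤ : Subfield L).map (frobenius L p)))
    (A : Set L)
    (hindep : ∀ a ∈ A,
      a ∉ (⊤ : Subfield L).map (frobenius L p) ⊔ k ⊔ Subfield.closure (A \ {a}))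
    (hgen : (⊤ : Subfield L).map (frobenius L p) ⊔ k ⊔ Subfield.closure A = ⊤) :
    AlgebraicIndependent ↥k ((↑) : A → L) :=
  macLane_algIndep_general p k hsep A hindep
end

section
/- Mac Lane's theorem (separable algebraicity part): if k ⊆ L is a finitely generated separable field extension of characteristic p > 0 and A is a p-basis of L over k, then L is separably algebraic over k(A). -/
namespace Derivation

variable {R L M : Type*} [CommRing R] [Field L] [Algebra R L] [AddCommGroup M] [Module L M]
  [Module R M] (D : Derivation R L M)

def constantSubfield : Subfield L where
  carrier := {y | D y = 0}
  zero_mem' := D.map_zero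
  one_mem' := D.map_one_eq_zero
  add_mem' {x y} hx hy := by simp_all
  neg_mem' {x} hx := by simp_all
  mul_mem' {x y} hx hy := by simp_all [leibniz]
  inv_mem' x hx := by simp_all [leibniz_inv]

theorem mem_constantSubfield {y : L} : y ∈ D.constantSubfield ↔ D y = 0 := Iff.rfl

theorem algebraMap_mem_constantSubfield (r : R) : algebraMap R L r ∈ D.constantSubfield :=
  D.map_algebraMap r

theorem pow_char_mem_constantSubfield (p : ℕ) [CharP L p] (y : L) :
    y ^ p ∈ D.constantSubfield := by
  rw [mem_constantSubfield, leibniz_pow, ← Nat.cast_smul_eq_nsmul L, CharP.cast_eq_zero,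
    zero_smul]

end Derivation

theorem Subfield.essFiniteType_of_sup_closure_eq_top {L : Type*} [Field L] (K : Subfield L)
    (S : Finset L) (h : K ⊔ Subfield.closure S = ⊤) : Algebra.EssFiniteType K L := by
  refine IntermediateField.fg_top_iff.mp ⟨S, ?_⟩
  rw [← IntermediateField.toSubfield_inj, IntermediateField.adjoin_toSubfield,
    IntermediateField.top_toSubfield, ← h, Subfield.closure_union]
  congr
  rw [show Set.range (algebraMap K L) = K from Subtype.range_coe, Subfield.closure_eq]

theorem Subfield.formallyUnramified_of_frobenius_sup_eq_top {L : Type*} [Field L] (p : ℕ)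
    [Fact p.Prime] [CharP L p] (K : Subfield L)
    (h : (⊤ : Subfield L).map (frobenius L p) ⊔ K = ⊤) : Algebra.FormallyUnramified K L := by
  have hD : (KaehlerDifferential.D K L).constantSubfield = ⊤ := by
    refine top_unique (h ▸ sup_le ?_ ?_)
    · rintro _ ⟨y, -, rfl⟩
      exact Derivation.pow_char_mem_constantSubfield _ p y
    · intro y hy
      exact Derivation.algebraMap_mem_constantSubfield _ (⟨y, hy⟩ : K)
  have hΩ : (⊤ : Submodule L Ω[L⁄K]) ≤ ⊥ := by
    rw [← KaehlerDifferential.span_range_derivation, Submodule.span_le]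
    rintro _ ⟨y, rfl⟩
    exact (Submodule.mem_bot L).mpr <|
      (Derivation.mem_constantSubfield _).mp (hD ▸ Subfield.mem_top y)
  exact ⟨(subsingleton_iff_forall_eq 0).mpr fun ω => hΩ trivial⟩

theorem macLane_sepAlgebraic_general {L : Type*} [Field L] (p : ℕ) [Fact p.Prime] [CharP L p]
    (k : Subfield L)
    (hfg : ∃ S : Finset L, k ⊔ Subfield.closure ↑S = ⊤)
    (A : Set L)
    (hgen : (⊤ : Subfield L).map (frobenius L p) ⊔ k ⊔ Subfield.closure A = ⊤) :
    ∀ x : L, IsSeparable ↥(k ⊔ Subfield.closure A) x := by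
  set K := k ⊔ Subfield.closure A
  obtain ⟨S, hS⟩ := hfg
  have : Algebra.EssFiniteType K L :=
    K.essFiniteType_of_sup_closure_eq_top S (top_unique (hS ▸ sup_le_sup_right le_sup_left _))
  have : Algebra.FormallyUnramified K L :=
    K.formallyUnramified_of_frobenius_sup_eq_top p (by rwa [← sup_assoc])
  have := Algebra.FormallyUnramified.isSeparable K L
  exact Algebra.IsSeparable.isSeparable K

/-- Mac Lane's theorem, separable algebraicity part: if `k ⊆ L` is a finitely generated
separable field extension of characteristic `p > 0` and `A` is a `p`-basis of `L` over
`k`, then `L` is separably algebraic over `k(A)`. -/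
theorem macLane_sepAlgebraic {L : Type*} [Field L] (p : ℕ) [Fact p.Prime] [CharP L p]
    (k : Subfield L)
    (hfg : ∃ S : Finset L, k ⊔ Subfield.closure ↑S = ⊤)
    (hsep : LinDisj (k.map (frobenius L p)) k ((⊤ : Subfield L).map (frobenius L p)))
    (A : Set L)
    (hindep : ∀ a ∈ A,
      a ∉ (⊤ : Subfield L).map (frobenius L p) ⊔ k ⊔ Subfield.closure (A \ {a}))
    (hgen : (⊤ : Subfield L).map (frobenius L p) ⊔ k ⊔ Subfield.closure A = ⊤) :
    ∀ x : L, IsSeparable ↥(k ⊔ Subfield.closure A) x :=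
  macLane_sepAlgebraic_general p k hfg A hgen
end

section
/- Let (K, δ) be a differentially perfect differential field of characteristic p > 0 (i.e., C_K = K^p, where C_K is the constant field) and let k be a differential subfield of K that is itself differentially perfect (C_k = k^p). Then the field extension k ⊆ K is separable, i.e., k is linearly disjoint from K^p over k^p. -/
/-!
By Kolchin's argument, constants of `K` that are linearly independent over the constants
`C_k = k^p` of `k` stay linearly independent over `k`: a shortest `k`-linear relation, normalised
to have a coefficient `1`, differentiates to a shorter one, so all its coefficients are constants.
Thus a `k^p`-basis of `K^p ⊆ C_K` is `k`-linearly independent, i.e. `K^p` and `k` are linearly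
disjoint over `k^p`, and linear disjointness is symmetric.
-/

namespace Subfield

variable {K : Type*} [Field K]

theorem linearIndependent_iff {F : Subfield K} {ι : Type*} {v : ι → K} :
    LinearIndependent F v ↔ ∀ (s : Finset ι) (g : ι → K), (∀ i ∈ s, g i ∈ F) →
      ∑ i ∈ s, g i * v i = 0 → ∀ i ∈ s, g i = 0 := by
  classical
  rw [linearIndependent_iff']
  constructor
  · intro h s g hgF hg i hi
    let G : ι → F := fun j => if hj : g j ∈ F then ⟨g j, hj⟩ else 0
    have hG : ∀ j ∈ s, (G j : K) = g j := fun j hj => by simp [G, dif_pos (hgF j hj)]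
    have hGsum : ∑ j ∈ s, G j • v j = 0 := by
      rw [← hg]
      exact Finset.sum_congr rfl fun j hj => by rw [Subfield.smul_def, hG j hj, smul_eq_mul]
    rw [← hG i hi, h s G hGsum i hi, ZeroMemClass.coe_zero]
  · intro h s G hG i hi
    exact Subtype.ext (h s (fun j => G j) (fun j _ => (G j).2) hG i hi)

end Subfield

namespace Derivation

variable {R K : Type*} [CommRing R] [Field K] [Algebra R K] (D : Derivation R K K)

theorem map_pow_char_eq_zero (p : ℕ) [CharP K p] (x : K) : D (x ^ p) = 0 := by
  rw [D.leibniz_pow, ← Nat.cast_smul_eq_nsmul K, CharP.cast_eq_zero, zero_smul]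

theorem sum_map_mul_eq_zero {ι : Type*} {s : Finset ι} {b v : ι → K} (hv : ∀ i, D (v i) = 0)
    (h : ∑ i ∈ s, b i * v i = 0) : ∑ i ∈ s, D (b i) * v i = 0 := by
  simpa [D.leibniz, hv, mul_comm] using congrArg D h

theorem linearIndependent_of_constants {k F : Subfield K} (hk : ∀ x ∈ k, D x ∈ k)
    (hF : ∀ x ∈ k, D x = 0 → x ∈ F) {ι : Type*} {v : ι → K} (hv : ∀ i, D (v i) = 0)
    (h : LinearIndependent F v) : LinearIndependent k v := by
  classical
  rw [Subfield.linearIndependent_iff] at h ⊢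
  intro s
  induction s using Finset.strongInduction with
  | _ s ih =>
    intro g hgk hg i hi
    by_contra hgi
    set b := fun j => g j / g i
    have hbk : ∀ j ∈ s, b j ∈ k := fun j hj => k.div_mem (hgk j hj) (hgk i hi)
    have hbi : b i = 1 := div_self hgi
    have hb : ∑ j ∈ s, b j * v j = 0 := by
      simp only [b, div_mul_eq_mul_div, ← Finset.sum_div, hg, zero_div]
    have hDbi : D (b i) = 0 := by rw [hbi, D.map_one_eq_zero]
    have hDb : ∑ j ∈ s.erase i, D (b j) * v j = 0 := by
      rw [Finset.sum_erase s (by rw [hDbi, zero_mul])]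
      exact D.sum_map_mul_eq_zero hv hb
    have hDbj : ∀ j ∈ s, D (b j) = 0 := fun j hj => by
      by_cases hji : j = i
      · rwa [hji]
      · exact ih _ (Finset.erase_ssubset hi) (fun j => D (b j))
          (fun j hj => hk _ (hbk j (Finset.mem_of_mem_erase hj))) hDb j
          (Finset.mem_erase.2 ⟨hji, hj⟩)
    have hbF : ∀ j ∈ s, b j ∈ F := fun j hj => hF _ (hbk j hj) (hDbj j hj)
    exact one_ne_zero (hbi ▸ h s b hbF hb i hi)

end Derivation

theorem IntermediateField.LinearDisjoint.linDisj {K : Type*} [Field K] {F L M : Subfield K}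
    (hL : F ≤ L) (hM : F ≤ M)
    (h : (Subfield.extendScalars hM).LinearDisjoint (Subfield.extendScalars hL)) :
    LinDisj F L M := fun _ a ha hFa =>
  h.linearIndependent_right (b := fun i => ⟨a i, ha i⟩)
    (.of_comp (Subfield.extendScalars hL).val.toLinearMap hFa)

theorem separable_of_differentially_perfect_general {K : Type*} [Field K] (p : ℕ)
    [Fact p.Prime] [CharP K p] (δ : K → K)
    (hadd : ∀ x y : K, δ (x + y) = δ x + δ y)
    (hmul : ∀ x y : K, δ (x * y) = x * δ y + y * δ x)
    (k : Subfield K) (hδk : ∀ x ∈ k, δ x ∈ k)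
    (hk : ∀ x ∈ k, (δ x = 0 ↔ ∃ y ∈ k, y ^ p = x)) :
    LinDisj (k.map (frobenius K p)) k ((⊤ : Subfield K).map (frobenius K p)) := by
  let D : Derivation ℤ K K := .mk' (AddMonoidHom.mk' δ hadd).toIntLinearMap hmul
  set F := k.map (frobenius K p)
  have hFk : F ≤ k := by
    rintro _ ⟨y, hy, rfl⟩
    exact k.pow_mem hy p
  have hFM : F ≤ (⊤ : Subfield K).map (frobenius K p) :=
    (Subfield.gc_map_comap _).monotone_l le_top
  let b := Module.Basis.ofVectorSpace F (Subfield.extendScalars hFM)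
  refine IntermediateField.LinearDisjoint.linDisj hFk hFM (.of_basis_left b ?_)
  refine D.linearIndependent_of_constants (F := F) hδk (fun x hx hx0 => ?_) (fun i => ?_) ?_
  · obtain ⟨y, hy, rfl⟩ := (hk x hx).1 hx0
    exact ⟨y, hy, rfl⟩
  · obtain ⟨y, -, hy⟩ := (b i).2
    show D (b i : K) = 0
    rw [← hy, frobenius_def]
    exact D.map_pow_char_eq_zero p y
  · exact b.linearIndependent.map' (Subfield.extendScalars hFM).val.toLinearMap
      (LinearMap.ker_eq_bot_of_injective Subtype.val_injective)

/-- If `(K, δ)` is a differentially perfect differential field of characteristic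
`p > 0` (its constants are exactly `K^p`) and `k` is a differentially perfect
differential subfield (its constants are exactly `k^p`), then the extension `k ⊆ K` is
separable: `k` is linearly disjoint from `K^p` over `k^p`. -/
theorem separable_of_differentially_perfect {K : Type*} [Field K] (p : ℕ)
    [Fact p.Prime] [CharP K p] (δ : K → K)
    (hadd : ∀ x y : K, δ (x + y) = δ x + δ y)
    (hmul : ∀ x y : K, δ (x * y) = x * δ y + y * δ x)
    (hK : ∀ x : K, δ x = 0 ↔ ∃ y : K, y ^ p = x)
    (k : Subfield K) (hδk : ∀ x ∈ k, δ x ∈ k)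
    (hk : ∀ x ∈ k, (δ x = 0 ↔ ∃ y ∈ k, y ^ p = x)) :
    LinDisj (k.map (frobenius K p)) k ((⊤ : Subfield K).map (frobenius K p)) :=
  separable_of_differentially_perfect_general p δ hadd hmul k hδk hk
end
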